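/- For fixed x > 0 and positive integer N, the function d ↦ DKhi(d, N, x) := (1/d)·E[(X_d − x·X'_N/N)_+] is nondecreasing in the positive integer d, where X_d and X'_N are independent chi-squared variables with d and N degrees of freedom. -/

import Mathlib

open MeasureTheory ProbabilityTheory Real

/-- The chi-squared distribution with `k` degrees of freedom, as the
Gamma distribution with shape `k/2` and rate `1/2`. -/
noncomputable def chiSqMeasure (k : ℕ) : Measure ℝ :=
  gammaMeasure ((k : ℝ) / 2) (1 / 2)

/-!
Let `p_a` be the density of the Gamma law of shape `a` and rate `r`, and `c ≥ 0`.
Since `t * p_a t = (a / r) * p_(a+1) t` and `(t - c)₊ = t * φ t` with `φ t = (1 - c / t)₊`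
nondecreasing and bounded, `a⁻¹ * E_a[(T - c)₊] = r⁻¹ * E_(a+1)[φ T]`. For `a < b` the ratio
`p_b / p_a` is a multiple of `t ^ (b - a)`, so `p_b - p_a` changes sign once, at some `t₀`, and
`∫ (φ - φ t₀) (p_b - p_a) ≥ 0`: the Gamma laws increase stochastically with the shape. Hence
`a⁻¹ * E_a[(T - c)₊]` is nondecreasing in `a`; apply this with `a = d / 2`, `r = 1 / 2`,
`c = x X'_N / N` after conditioning on `X'_N`.
-/

theorem integral_mul_le_integral_mul_of_crossing {μ : Measure ℝ} {f g φ : ℝ → ℝ} {C t₀ : ℝ}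
    (hf : Integrable f μ) (hg : Integrable g μ) (hfg : ∫ t, f t ∂μ = ∫ t, g t ∂μ)
    (hφ : Monotone φ) (hφC : ∀ t, ‖φ t‖ ≤ C)
    (hlo : ∀ᵐ t ∂μ, t < t₀ → g t ≤ f t) (hhi : ∀ᵐ t ∂μ, t₀ < t → f t ≤ g t) :
    ∫ t, φ t * f t ∂μ ≤ ∫ t, φ t * g t ∂μ := by
  have hφf := hf.bdd_mul hφ.measurable.aestronglyMeasurable (ae_of_all _ hφC)
  have hφg := hg.bdd_mul hφ.measurable.aestronglyMeasurable (ae_of_all _ hφC)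
  have hnonneg : 0 ≤ ∫ t, (φ t - φ t₀) * (g t - f t) ∂μ := by
    refine integral_nonneg_of_ae ?_
    filter_upwards [hlo, hhi] with t hlo hhi
    rcases lt_trichotomy t t₀ with ht | rfl | ht
    · exact mul_nonneg_of_nonpos_of_nonpos (sub_nonpos.2 (hφ ht.le)) (sub_nonpos.2 (hlo ht))
    · simp
    · exact mul_nonneg (sub_nonneg.2 (hφ ht.le)) (sub_nonneg.2 (hhi ht))
  have hsplit : ∫ t, (φ t - φ t₀) * (g t - f t) ∂μ =
      (∫ t, φ t * g t ∂μ - ∫ t, φ t * f t ∂μ) - φ t₀ * (∫ t, g t ∂μ - ∫ t, f t ∂μ) := by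
    have hexpand : (fun t => (φ t - φ t₀) * (g t - f t)) =
        fun t => (φ t * g t - φ t * f t) - φ t₀ * (g t - f t) := by
      funext t
      ring
    rw [hexpand, integral_sub, integral_sub hφg hφf, integral_const_mul, integral_sub hg hf]
    · exact hφg.sub hφf
    · exact (hg.sub hf).const_mul _
  rw [hsplit, hfg] at hnonneg
  linarith

section PositivePart

variable {c : ℝ}

lemma mul_max_sub_div_self (hc : 0 ≤ c) (t : ℝ) : t * (max (t - c) 0 / t) = max (t - c) 0 := by
  rcases eq_or_ne t 0 with rfl | ht
  · simp [hc]
  · exact mul_div_cancel₀ _ ht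

lemma max_sub_div_self_mem_Icc (hc : 0 ≤ c) (t : ℝ) : max (t - c) 0 / t ∈ Set.Icc 0 1 := by
  rcases le_or_gt t c with htc | htc
  · simp [max_eq_right (sub_nonpos.2 htc)]
  · have ht : 0 < t := hc.trans_lt htc
    rw [max_eq_left (by linarith)]
    exact ⟨div_nonneg (by linarith) ht.le, (div_le_one ht).2 (by linarith)⟩

lemma monotone_max_sub_div_self (hc : 0 ≤ c) : Monotone fun t : ℝ => max (t - c) 0 / t := by
  intro s t hst
  rcases le_or_gt s c with hsc | hsc
  · simpa [max_eq_right (sub_nonpos.2 hsc)] using (max_sub_div_self_mem_Icc hc t).1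
  · have hs : 0 < s := hc.trans_lt hsc
    simp only [max_eq_left (by linarith : 0 ≤ s - c), max_eq_left (by linarith : 0 ≤ t - c),
      sub_div, div_self hs.ne', div_self (hs.trans_le hst).ne']
    gcongr

end PositivePart

section Gamma

variable {a b r : ℝ}

lemma gammaPDFReal_of_neg {t : ℝ} (ht : t < 0) : gammaPDFReal a r t = 0 := by
  simp [gammaPDFReal, not_le.mpr ht]

lemma integral_gammaMeasure (ha : 0 < a) (hr : 0 < r) (f : ℝ → ℝ) :
    ∫ t, f t ∂gammaMeasure a r = ∫ t, f t * gammaPDFReal a r t := by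
  rw [gammaMeasure, integral_withDensity_eq_integral_toReal_smul (f := gammaPDF a r)
    (measurable_gammaPDFReal a r).ennreal_ofReal (ae_of_all _ fun _ => ENNReal.ofReal_lt_top)]
  congr with t
  rw [gammaPDF, ENNReal.toReal_ofReal (gammaPDFReal_nonneg ha hr t), smul_eq_mul, mul_comm]

lemma integral_gammaPDFReal (ha : 0 < a) (hr : 0 < r) : ∫ t, gammaPDFReal a r t = 1 := by
  have := isProbabilityMeasure_gammaMeasure ha hr
  simpa using (integral_gammaMeasure ha hr fun _ => 1).symm

-- a non-integrable function has integral `0`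
lemma integrable_gammaPDFReal (ha : 0 < a) (hr : 0 < r) : Integrable (gammaPDFReal a r) :=
  Integrable.of_integral_ne_zero (by simp [integral_gammaPDFReal ha hr])

lemma ae_nonneg_gammaMeasure (a r : ℝ) : ∀ᵐ t ∂gammaMeasure a r, 0 ≤ t := by
  rw [gammaMeasure, ae_withDensity_iff (f := gammaPDF a r)
    (measurable_gammaPDFReal a r).ennreal_ofReal]
  exact ae_of_all _ fun t ht => not_lt.1 fun h => ht (gammaPDF_of_neg h)

lemma mul_gammaPDFReal (ha : 0 < a) (hr : 0 < r) (t : ℝ) :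
    t * gammaPDFReal a r t = a / r * gammaPDFReal (a + 1) r t := by
  rcases lt_or_ge t 0 with ht | ht
  · simp [gammaPDFReal_of_neg ht]
  rcases ht.eq_or_lt with rfl | ht
  · simp [gammaPDFReal, Real.zero_rpow ha.ne']
  simp only [gammaPDFReal, if_pos ht.le, add_sub_cancel_right, Real.rpow_add_one hr.ne',
    Gamma_add_one ha.ne', Real.rpow_sub_one ht.ne']
  field_simp [(Gamma_pos_of_pos ha).ne']

lemma integral_mul_gammaMeasure (ha : 0 < a) (hr : 0 < r) (f : ℝ → ℝ) :
    ∫ t, t * f t ∂gammaMeasure a r = a / r * ∫ t, f t ∂gammaMeasure (a + 1) r := by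
  rw [integral_gammaMeasure ha hr, integral_gammaMeasure (by linarith) hr, ← integral_const_mul]
  congr with t
  rw [mul_right_comm, mul_gammaPDFReal ha hr]
  ring

lemma integrable_id_gammaMeasure (ha : 0 < a) (hr : 0 < r) :
    Integrable (fun t => t) (gammaMeasure a r) := by
  have := isProbabilityMeasure_gammaMeasure (add_pos ha one_pos) hr
  have h := integral_mul_gammaMeasure ha hr fun _ => 1
  simp only [mul_one, integral_const, probReal_univ, smul_eq_mul] at h
  exact Integrable.of_integral_ne_zero (h ▸ (div_pos ha hr).ne')

noncomputable def gammaShapeCrossing (a b r : ℝ) : ℝ :=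
  (Gamma b / (r ^ (b - a) * Gamma a)) ^ (b - a)⁻¹

lemma gammaPDFReal_eq_rpow_div_mul (ha : 0 < a) (hb : 0 < b) (hr : 0 < r) {t : ℝ}
    (ht : 0 < t) : gammaPDFReal b r t =
      t ^ (b - a) / (Gamma b / (r ^ (b - a) * Gamma a)) * gammaPDFReal a r t := by
  simp only [gammaPDFReal, if_pos ht.le, Real.rpow_sub hr, Real.rpow_sub ht]
  field_simp [(Gamma_pos_of_pos ha).ne', (Gamma_pos_of_pos hb).ne']

lemma gammaPDFReal_le_gammaPDFReal_iff (ha : 0 < a) (hab : a < b) (hr : 0 < r) {t : ℝ}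
    (ht : 0 < t) : gammaPDFReal b r t ≤ gammaPDFReal a r t ↔ t ≤ gammaShapeCrossing a b r := by
  have hb := ha.trans hab
  have hK : 0 < Gamma b / (r ^ (b - a) * Gamma a) := by
    have := Gamma_pos_of_pos ha; have := Gamma_pos_of_pos hb; positivity
  rw [gammaShapeCrossing, Real.le_rpow_inv_iff_of_pos ht.le hK.le (sub_pos.2 hab),
    gammaPDFReal_eq_rpow_div_mul ha hb hr ht,
    mul_le_iff_le_one_left (gammaPDFReal_pos ha hr ht), div_le_one hK]

theorem integral_gammaMeasure_le_of_monotone (ha : 0 < a) (hab : a ≤ b) (hr : 0 < r)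
    {φ : ℝ → ℝ} {C : ℝ} (hφ : Monotone φ) (hφC : ∀ t, ‖φ t‖ ≤ C) :
    ∫ t, φ t ∂gammaMeasure a r ≤ ∫ t, φ t ∂gammaMeasure b r := by
  rcases hab.eq_or_lt with rfl | hab
  · rfl
  have hb := ha.trans hab
  rw [integral_gammaMeasure ha hr, integral_gammaMeasure hb hr]
  refine integral_mul_le_integral_mul_of_crossing (integrable_gammaPDFReal ha hr)
    (integrable_gammaPDFReal hb hr)
    (by rw [integral_gammaPDFReal ha hr, integral_gammaPDFReal hb hr]) hφ hφC
    (t₀ := gammaShapeCrossing a b r) ?_ (ae_of_all _ fun t ht => ?_)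
  · filter_upwards [Measure.ae_ne volume 0] with t ht₀ ht
    rcases ht₀.lt_or_gt with hneg | hpos
    · simp [gammaPDFReal_of_neg hneg]
    · exact (gammaPDFReal_le_gammaPDFReal_iff ha hab hr hpos).2 ht.le
  · have hpos := (Real.rpow_nonneg (by positivity) _).trans_lt ht
    exact (not_le.1 (mt (gammaPDFReal_le_gammaPDFReal_iff ha hab hr hpos).1 ht.not_ge)).le

theorem inv_mul_integral_max_sub_gammaMeasure_le {a b r c : ℝ} (ha : 0 < a) (hab : a ≤ b)
    (hr : 0 < r) (hc : 0 ≤ c) :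
    a⁻¹ * ∫ t, max (t - c) 0 ∂gammaMeasure a r ≤ b⁻¹ * ∫ t, max (t - c) 0 ∂gammaMeasure b r := by
  have size_bias : ∀ a, 0 < a → a⁻¹ * ∫ t, max (t - c) 0 ∂gammaMeasure a r =
      r⁻¹ * ∫ t, max (t - c) 0 / t ∂gammaMeasure (a + 1) r := by
    intro a ha
    have h := integral_mul_gammaMeasure ha hr fun t => max (t - c) 0 / t
    simp only [mul_max_sub_div_self hc] at h
    rw [h]
    field_simp
  rw [size_bias a ha, size_bias b (ha.trans_le hab)]
  refine mul_le_mul_of_nonneg_left ?_ (inv_nonneg.2 hr.le)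
  refine integral_gammaMeasure_le_of_monotone (add_pos ha one_pos) (by linarith : a + 1 ≤ b + 1) hr
    (monotone_max_sub_div_self hc) (C := 1) fun t => ?_
  obtain ⟨h0, h1⟩ := max_sub_div_self_mem_Icc hc t
  rwa [Real.norm_of_nonneg h0]

end Gamma

section ChiSquared

lemma isProbabilityMeasure_chiSqMeasure {k : ℕ} (hk : 0 < k) :
    IsProbabilityMeasure (chiSqMeasure k) :=
  isProbabilityMeasure_gammaMeasure (by positivity) (by norm_num)

lemma integrable_id_chiSqMeasure {k : ℕ} (hk : 0 < k) :
    Integrable (fun t => t) (chiSqMeasure k) :=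
  integrable_id_gammaMeasure (by positivity) (by norm_num)

lemma ae_nonneg_chiSqMeasure (k : ℕ) : ∀ᵐ t ∂chiSqMeasure k, 0 ≤ t :=
  ae_nonneg_gammaMeasure _ _

theorem one_div_mul_integral_max_sub_chiSqMeasure_le {d₁ d₂ : ℕ} (hd₁ : 0 < d₁) (h : d₁ ≤ d₂)
    {c : ℝ} (hc : 0 ≤ c) :
    1 / (d₁ : ℝ) * ∫ t, max (t - c) 0 ∂chiSqMeasure d₁ ≤
      1 / (d₂ : ℝ) * ∫ t, max (t - c) 0 ∂chiSqMeasure d₂ := by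
  have hhalf : ∀ d : ℕ, 1 / (d : ℝ) = 2⁻¹ * ((d : ℝ) / 2)⁻¹ := fun d => by rw [inv_div]; ring
  rw [hhalf d₁, hhalf d₂, mul_assoc, mul_assoc]
  exact mul_le_mul_of_nonneg_left
    (inv_mul_integral_max_sub_gammaMeasure_le (by positivity) (by gcongr) (by norm_num) hc)
    (by norm_num)

end ChiSquared

theorem DKhi_mono_in_d (N : ℕ) (hN : 0 < N) (x : ℝ) (hx : 0 < x)
    (d₁ d₂ : ℕ) (hd₁ : 0 < d₁) (h : d₁ ≤ d₂) :
    (1 / (d₁ : ℝ)) *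
        ∫ q : ℝ × ℝ, max (q.1 - x * q.2 / N) 0
          ∂((chiSqMeasure d₁).prod (chiSqMeasure N)) ≤
      (1 / (d₂ : ℝ)) *
        ∫ q : ℝ × ℝ, max (q.1 - x * q.2 / N) 0
          ∂((chiSqMeasure d₂).prod (chiSqMeasure N)) := by
  have hd₂ := hd₁.trans_le h
  have := isProbabilityMeasure_chiSqMeasure hN
  have hint : ∀ {d : ℕ}, 0 < d → Integrable (fun q : ℝ × ℝ => max (q.1 - x * q.2 / N) 0)
      ((chiSqMeasure d).prod (chiSqMeasure N)) := fun hd => by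
    have := isProbabilityMeasure_chiSqMeasure hd
    exact (((integrable_id_chiSqMeasure hd).comp_fst _).sub
      ((((integrable_id_chiSqMeasure hN).comp_snd _).const_mul x).div_const _)).pos_part
  have := isProbabilityMeasure_chiSqMeasure hd₁
  have := isProbabilityMeasure_chiSqMeasure hd₂
  rw [integral_prod_symm _ (hint hd₁), integral_prod_symm _ (hint hd₂), ← integral_const_mul,
    ← integral_const_mul]
  refine integral_mono_ae ((hint hd₁).integral_prod_right.const_mul _)
    ((hint hd₂).integral_prod_right.const_mul _) ?_
  filter_upwards [ae_nonneg_chiSqMeasure N] with s hs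
  exact one_div_mul_integral_max_sub_chiSqMeasure_le hd₁ h (by positivity)
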